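/- Let μ be the Thue-Morse morphism and x̄ the letter complement. For all k ≥ 1 and letters x, y, z ∈ {0,1}: the word x·μ^k(y·ȳ·y)·z is a factor of the Thue-Morse word if and only if x̄·μ^{k-1}(y·ȳ·y)·z is a factor of the Thue-Morse word. -/

import Mathlib

/-!
Since `t (2i) = t i` and `t (2i+1) = ¬t i`, the word `μ(u)` occurs at `2n` iff `u` occurs at `n`;
reading off the boundary letters, `x μ(w) z` occurs at `2p+1` iff `x̄ w z` occurs at `p`.
Conversely every occurrence of `x μ^k(y ȳ y) z = x y ȳ ȳ y ⋯` starts at an odd position: the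
square `ȳ ȳ` cannot sit on a block `t (2i) t (2i+1)`, whose letters differ.
-/

/-- The Thue-Morse morphism on letters: μ(0)=01, μ(1)=10 (0 = `false`, 1 = `true`). -/
def mu : Bool → List Bool
  | false => [false, true]
  | true  => [true, false]

/-- The Thue-Morse morphism extended to words. -/
def muW (w : List Bool) : List Bool := w.flatMap mu

/-- The finite word `u` is a prefix of the infinite word `x`. -/
def IsPrefixI (u : List Bool) (x : ℕ → Bool) : Prop :=
  ∀ i, i < u.length → u.getD i false = x i

/-- `t` is the Thue-Morse word: every `μ^n(0)` is a prefix of `t`. -/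
def IsTMWord (t : ℕ → Bool) : Prop :=
  ∀ n, IsPrefixI (muW^[n] [false]) t

/-- The finite word `u` is a factor of the infinite word `x`. -/
def IsFactorI (u : List Bool) (x : ℕ → Bool) : Prop :=
  ∃ k, ∀ i, i < u.length → u.getD i false = x (k + i)

def OccursAt (u : List Bool) (x : ℕ → Bool) (n : ℕ) : Prop :=
  ∀ i, i < u.length → u.getD i false = x (n + i)

theorem isFactorI_iff_exists_occursAt {u : List Bool} {x : ℕ → Bool} :
    IsFactorI u x ↔ ∃ n, OccursAt u x n :=
  Iff.rfl

namespace OccursAt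

variable {x : ℕ → Bool} {n : ℕ}

theorem nil : OccursAt [] x n := fun _ h => absurd h (Nat.not_lt_zero _)

theorem cons_iff {a : Bool} {u : List Bool} :
    OccursAt (a :: u) x n ↔ x n = a ∧ OccursAt u x (n + 1) := by
  constructor
  · intro h
    refine ⟨(h 0 (by simp)).symm, fun i hi => ?_⟩
    simpa [Nat.add_right_comm n 1 i, Nat.add_assoc] using h (i + 1) (by simpa using hi)
  · rintro ⟨h0, h⟩ (_ | i) hi
    · simpa using h0.symm
    · simpa [Nat.add_right_comm n 1 i, Nat.add_assoc] using h i (by simpa using hi)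

theorem singleton_iff {a : Bool} : OccursAt [a] x n ↔ x n = a := by
  simp [cons_iff, nil]

theorem append_iff {u v : List Bool} :
    OccursAt (u ++ v) x n ↔ OccursAt u x n ∧ OccursAt v x (n + u.length) := by
  induction u generalizing n with
  | nil => simp [nil]
  | cons a u ih => simp [cons_iff, ih, and_assoc, Nat.add_right_comm n 1, Nat.add_assoc]

end OccursAt

theorem muW_cons (a : Bool) (w : List Bool) : muW (a :: w) = a :: (!a) :: muW w := by
  cases a <;> rfl

theorem length_muW (w : List Bool) : (muW w).length = 2 * w.length := by
  induction w with
  | nil => rfl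
  | cons a w ih => rw [muW_cons]; simp [ih]; ring

theorem getElem?_muW_two_mul (w : List Bool) (j : ℕ) : (muW w)[2 * j]? = w[j]? := by
  induction w generalizing j with
  | nil => rfl
  | cons a w ih => cases j <;> simp [muW_cons, Nat.mul_succ, ih]

theorem getElem?_muW_two_mul_add_one (w : List Bool) (j : ℕ) :
    (muW w)[2 * j + 1]? = w[j]?.map (!·) := by
  induction w generalizing j with
  | nil => rfl
  | cons a w ih => cases j <;> simp [muW_cons, Nat.mul_succ, ih]

theorem length_muW_iterate (w : List Bool) (n : ℕ) : (muW^[n] w).length = 2 ^ n * w.length := by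
  induction n with
  | zero => simp
  | succ n ih => rw [Function.iterate_succ_apply', length_muW, ih, pow_succ]; ring

theorem muW_iterate_cons_not (a : Bool) (w : List Bool) (m : ℕ) :
    ∃ r, muW^[m] (a :: (!a) :: w) = a :: (!a) :: r := by
  induction m with
  | zero => exact ⟨w, rfl⟩
  | succ m ih =>
    obtain ⟨r, hr⟩ := ih
    exact ⟨muW ((!a) :: r), by rw [Function.iterate_succ_apply', hr, muW_cons]⟩

namespace IsTMWord

variable {t : ℕ → Bool}

theorem getElem?_iterate (ht : IsTMWord t) {n i : ℕ} (hi : i < 2 ^ n) :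
    (muW^[n] [false])[i]? = some (t i) := by
  have hlen : i < (muW^[n] [false]).length := by simpa [length_muW_iterate] using hi
  rw [← ht n i hlen, List.getD_eq_getElem?_getD, List.getElem?_eq_getElem hlen]
  rfl

theorem apply_two_mul (ht : IsTMWord t) (i : ℕ) : t (2 * i) = t i := by
  have hi : i < 2 ^ i := Nat.lt_two_pow_self
  have h2i : 2 * i < 2 ^ (i + 1) := by rw [pow_succ]; omega
  simpa [ht.getElem?_iterate hi, Function.iterate_succ_apply', getElem?_muW_two_mul]
    using (ht.getElem?_iterate h2i).symm

theorem apply_two_mul_add_one (ht : IsTMWord t) (i : ℕ) : t (2 * i + 1) = !t i := by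
  have hi : i < 2 ^ i := Nat.lt_two_pow_self
  have h2i : 2 * i + 1 < 2 ^ (i + 1) := by rw [pow_succ]; omega
  have h := ht.getElem?_iterate h2i
  simp only [Function.iterate_succ_apply', getElem?_muW_two_mul_add_one, ht.getElem?_iterate hi,
    Option.map_some, Option.some.injEq] at h
  exact h.symm

theorem odd_of_apply_eq_apply_succ (ht : IsTMWord t) {n : ℕ} (h : t n = t (n + 1)) : Odd n := by
  obtain ⟨m, rfl | rfl⟩ := Nat.even_or_odd' n
  · rw [ht.apply_two_mul, ht.apply_two_mul_add_one] at h
    exact ((Bool.eq_not_self _).mp h).elim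
  · exact ⟨m, rfl⟩

theorem occursAt_muW_iff (ht : IsTMWord t) {u : List Bool} {n : ℕ} :
    OccursAt (muW u) t (2 * n) ↔ OccursAt u t n := by
  induction u generalizing n with
  | nil => exact iff_of_true OccursAt.nil OccursAt.nil
  | cons a u ih =>
    have h : 2 * n + 1 + 1 = 2 * (n + 1) := by ring
    simp only [muW_cons, OccursAt.cons_iff, ht.apply_two_mul, ht.apply_two_mul_add_one,
      Bool.not_inj_iff, h, ih, and_self_left]

theorem occursAt_two_mul_add_one_iff (ht : IsTMWord t) {x z : Bool} {w : List Bool} {p : ℕ} :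
    OccursAt ([x] ++ muW w ++ [z]) t (2 * p + 1) ↔ OccursAt ([!x] ++ w ++ [z]) t p := by
  have hx : 2 * p + 1 + 1 = 2 * (p + 1) := by ring
  have hz : 2 * p + 1 + ([x] ++ muW w).length = 2 * (p + ([!x] ++ w).length) := by
    simp only [List.length_append, List.length_singleton, length_muW]; ring
  simp only [OccursAt.append_iff, OccursAt.singleton_iff, hz, List.length_singleton, hx,
    ht.occursAt_muW_iff, ht.apply_two_mul, ht.apply_two_mul_add_one, Bool.not_eq_eq_eq_not]

end IsTMWord

theorem tm_forbidden_iff (t : ℕ → Bool) (ht : IsTMWord t)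
    (k : ℕ) (hk : 1 ≤ k) (x y z : Bool) :
    IsFactorI ([x] ++ muW^[k] [y, !y, y] ++ [z]) t ↔
      IsFactorI ([!x] ++ muW^[k - 1] [y, !y, y] ++ [z]) t := by
  obtain ⟨m, rfl⟩ : ∃ m, k = m + 1 := ⟨k - 1, by omega⟩
  rw [Nat.add_sub_cancel, Function.iterate_succ_apply']
  set w := muW^[m] [y, !y, y]
  simp only [isFactorI_iff_exists_occursAt]
  constructor
  · rintro ⟨q, hq⟩
    obtain ⟨r, hr⟩ := muW_iterate_cons_not y [y] m
    have hshape : [x] ++ muW w ++ [z] = [x, y, !y, !y] ++ (y :: muW r ++ [z]) := by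
      simp [w, hr, muW_cons]
    have hsq : t (q + 2) = t (q + 2 + 1) := by
      have hpre := (OccursAt.append_iff.mp (hshape ▸ hq)).1
      simp only [OccursAt.cons_iff, Nat.add_assoc, Nat.reduceAdd] at hpre
      rw [hpre.2.2.1, hpre.2.2.2.1]
    obtain ⟨p, rfl⟩ : ∃ p, q = 2 * p + 1 := by
      obtain ⟨p, hp⟩ := ht.odd_of_apply_eq_apply_succ hsq
      exact ⟨p - 1, by omega⟩
    exact ⟨p, ht.occursAt_two_mul_add_one_iff.mp hq⟩
  · rintro ⟨p, hp⟩
    exact ⟨2 * p + 1, ht.occursAt_two_mul_add_one_iff.mpr hp⟩
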